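/- For a coupled self-adjoint boundary condition [e^{iγ}K | -I] with γ∈[0,π), K∈SL(2,ℝ), and a fixed equation with coefficient f_0, the discrete Sturm-Liouville problem has exactly N-1 eigenvalues if k_{12}≠0 and k_{11}=f_0 k_{12}, and exactly N eigenvalues otherwise (i.e., if k_{12}=0, or k_{12}≠0 and k_{11}≠f_0 k_{12}). -/

import Mathlib

open Polynomial Matrix Real

/-- The solution of `-∇(fₙ Δyₙ) + qₙ yₙ = λ wₙ yₙ` (`n ≥ 1`) with initial data
`y₀`, `f₀Δy₀ = d₀`, as a sequence of polynomials in `λ`. -/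
noncomputable def slSol (f q w : ℕ → ℝ) (y0 d0 : ℂ) : ℕ → Polynomial ℂ
  | 0 => C y0
  | 1 => C (y0 + d0 / (f 0 : ℂ))
  | n + 2 =>
      slSol f q w y0 d0 (n + 1) + C ((f (n + 1) : ℂ))⁻¹ *
        (C ((f n : ℂ)) * (slSol f q w y0 d0 (n + 1) - slSol f q w y0 d0 n)
          + C ((q (n + 1) : ℂ)) * slSol f q w y0 d0 (n + 1)
          - X * C ((w (n + 1) : ℂ)) * slSol f q w y0 d0 (n + 1))

/-- The characteristic polynomial `Γ` of the problem `(ω, A|B)`; its zeros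
(all real, counted with multiplicity) are the eigenvalues. -/
noncomputable def slCharPoly (N : ℕ) (f q w : ℕ → ℝ)
    (A B : Matrix (Fin 2) (Fin 2) ℂ) : Polynomial ℂ :=
  let φ := slSol f q w 1 0
  let ψ := slSol f q w 0 1
  let c11 := B 0 0 * A 1 1 - B 1 0 * A 0 1
  let c12 := -(B 0 0) * A 1 0 + B 1 0 * A 0 0
  let c21 := B 0 1 * A 1 1 - B 1 1 * A 0 1
  let c22 := -(B 0 1) * A 1 0 + B 1 1 * A 0 0
  C (A.det + B.det) + C c11 * φ N + C c12 * ψ N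
    + C (c21 * (f N : ℂ)) * (φ (N + 1) - φ N)
    + C (c22 * (f N : ℂ)) * (ψ (N + 1) - ψ N)

/-! The solution `yₙ(λ)` of the recurrence is a polynomial of degree `≤ n - 1` whose
`λⁿ⁻¹`-coefficient is `y₁ · ∏_{0<j<n} (-w_j / f_j)`. For `A = e^{iγ}K`, `B = -I`, superposition
of solutions gives `Γ = c - a₂₂ φ_N + a₂₁ ψ_N + f_N (u_{N+1} - u_N)` with `u` the solution
for `y₀ = a₁₂`, `f₀Δy₀ = -a₁₁`, so the `λᴺ`-coefficient of `Γ` is a nonzero multiple of `a₁₂ - a₁₁ / f₀`.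
If `k₁₁ = f₀ k₁₂`, then `u₁ = 0`, so `u` solves the equation shifted by one index and loses a
degree; the `λᴺ⁻¹`-coefficient of `Γ` is then a nonzero multiple of
`w₁ (f₀ k₂₂ - k₂₁) + f₀² k₁₂ w_N`, which `k₁₂` times is `w₁ + (f₀ k₁₂)² w_N > 0` as `det K = 1`.
Over `ℂ` the number of roots is the degree. -/

open Finset

section
variable (f q w : ℕ → ℝ)

noncomputable def slLead (n : ℕ) : ℂ := ∏ j ∈ range n, (-(w (j + 1) : ℂ) / f (j + 1))

lemma slLead_ne_zero (n : ℕ) (hfw : ∀ j < n, f (j + 1) ≠ 0 ∧ w (j + 1) ≠ 0) :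
    slLead f w n ≠ 0 :=
  prod_ne_zero_iff.mpr fun j hj ↦ by
    obtain ⟨hf, hw⟩ := hfw j (mem_range.mp hj)
    exact div_ne_zero (neg_ne_zero.mpr (by exact_mod_cast hw)) (by exact_mod_cast hf)

lemma slLead_succ (n : ℕ) :
    slLead f w (n + 1) = slLead f w n * (-(w (n + 1) : ℂ) / f (n + 1)) :=
  prod_range_succ _ n

lemma slLead_succ' (n : ℕ) :
    slLead f w (n + 1) =
      slLead (fun k ↦ f (k + 1)) (fun k ↦ w (k + 1)) n * (-(w 1 : ℂ) / f 1) :=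
  prod_range_succ' _ n

lemma slSol_natDegree_le (y0 d0 : ℂ) : ∀ n, (slSol f q w y0 d0 n).natDegree ≤ n - 1
  | 0 => by simp [slSol]
  | 1 => by simp [slSol]
  | n + 2 => by
    have h1 := slSol_natDegree_le y0 d0 (n + 1)
    have h0 := slSol_natDegree_le y0 d0 n
    rw [slSol]
    compute_degree
    omega

lemma slSol_coeff_eq_zero (y0 d0 : ℂ) {n k : ℕ} (h : n - 1 < k) :
    (slSol f q w y0 d0 n).coeff k = 0 :=
  coeff_eq_zero_of_natDegree_lt ((slSol_natDegree_le f q w y0 d0 n).trans_lt h)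

lemma slSol_succ_coeff_self (y0 d0 : ℂ) :
    ∀ n, (slSol f q w y0 d0 (n + 1)).coeff n = (y0 + d0 / f 0) * slLead f w n
  | 0 => by simp [slSol, slLead]
  | n + 1 => by
    have h1 := slSol_coeff_eq_zero f q w y0 d0 (n := n + 1) (k := n + 1) (by omega)
    have h0 := slSol_coeff_eq_zero f q w y0 d0 (n := n) (k := n + 1) (by omega)
    rw [slSol, slLead, prod_range_succ, ← slLead]
    simp only [coeff_add, coeff_sub, coeff_C_mul, mul_assoc X, coeff_X_mul, h1, h0,
      slSol_succ_coeff_self y0 d0 n]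
    ring

lemma slSol_eq_C_mul_add_C_mul (y0 d0 : ℂ) : ∀ n,
    slSol f q w y0 d0 n = C y0 * slSol f q w 1 0 n + C d0 * slSol f q w 0 1 n
  | 0 => by simp [slSol]
  | 1 => by simp only [slSol, ← C_mul, ← C_add]; ring_nf
  | n + 2 => by
    rw [slSol, slSol, slSol, slSol_eq_C_mul_add_C_mul y0 d0 n,
      slSol_eq_C_mul_add_C_mul y0 d0 (n + 1)]
    ring

lemma slSol_succ_eq_shift (hf0 : f 0 ≠ 0) (y0 : ℂ) : ∀ n,
    slSol f q w y0 (-(f 0 * y0)) (n + 1) =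
      slSol (fun k ↦ f (k + 1)) (fun k ↦ q (k + 1)) (fun k ↦ w (k + 1)) 0 (-(f 0 * y0)) n
  | 0 => by simp [slSol, neg_div, mul_div_cancel_left₀, hf0]
  | 1 => by
    simp only [slSol, neg_div, mul_div_cancel_left₀ y0 (Complex.ofReal_ne_zero.mpr hf0),
      add_neg_cancel, map_zero]
    simp only [zero_add, div_eq_inv_mul, C_mul, C_neg]
    ring
  | n + 2 => by
    rw [slSol, slSol_succ_eq_shift hf0 y0 n, slSol_succ_eq_shift hf0 y0 (n + 1), slSol]

lemma slCharPoly_neg_one (N : ℕ) (A : Matrix (Fin 2) (Fin 2) ℂ) :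
    slCharPoly N f q w A (-1) =
      C (A.det + 1) - C (A 1 1) * slSol f q w 1 0 N + C (A 1 0) * slSol f q w 0 1 N
        + C (f N : ℂ) *
          (slSol f q w (A 0 1) (-A 0 0) (N + 1) - slSol f q w (A 0 1) (-A 0 0) N) := by
  simp only [slCharPoly, slSol_eq_C_mul_add_C_mul f q w (A 0 1)]
  simp [det_fin_two, C_mul, C_neg]
  ring

lemma slCharPoly_neg_one_natDegree_of_ne (N : ℕ) (hN : N ≠ 0) (A : Matrix (Fin 2) (Fin 2) ℂ)
    (hf : ∀ n ≤ N, f n ≠ 0) (hw : ∀ n, 1 ≤ n → n ≤ N → w n ≠ 0)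
    (hA : A 0 0 ≠ f 0 * A 0 1) :
    (slCharPoly N f q w A (-1)).natDegree = N := by
  have hf0 : (f 0 : ℂ) ≠ 0 := by exact_mod_cast hf 0 N.zero_le
  have hlt : N - 1 < N := by omega
  rw [slCharPoly_neg_one]
  apply natDegree_eq_of_le_of_coeff_ne_zero
  · have := slSol_natDegree_le f q w 1 0 N
    have := slSol_natDegree_le f q w 0 1 N
    have := slSol_natDegree_le f q w (A 0 1) (-A 0 0) N
    have := slSol_natDegree_le f q w (A 0 1) (-A 0 0) (N + 1)
    compute_degree
    omega
  · simp only [coeff_add, coeff_sub, coeff_C_mul, coeff_C, if_neg hN,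
      slSol_coeff_eq_zero f q w _ _ hlt, slSol_succ_coeff_self, mul_zero, sub_zero, zero_add]
    refine mul_ne_zero (by exact_mod_cast hf _ le_rfl) (mul_ne_zero ?_ ?_)
    · contrapose! hA
      field_simp at hA
      linear_combination -hA
    · exact slLead_ne_zero f w _ fun j hj ↦ ⟨hf _ (by omega), hw _ (by omega) (by omega)⟩

lemma slCharPoly_neg_one_natDegree_of_eq (M : ℕ) (A : Matrix (Fin 2) (Fin 2) ℂ)
    (hf : ∀ n ≤ M + 2, f n ≠ 0) (hw : ∀ n, 1 ≤ n → n ≤ M + 2 → w n ≠ 0)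
    (hA : A 0 0 = f 0 * A 0 1)
    (hr : w 1 * (f 0 * A 1 1 - A 1 0) + f 0 ^ 2 * A 0 1 * w (M + 2) ≠ 0) :
    (slCharPoly (M + 2) f q w A (-1)).natDegree = M + 1 := by
  have hf0 := hf 0 (by omega)
  have hf0' : (f 0 : ℂ) ≠ 0 := by exact_mod_cast hf0
  have hf1 : (f 1 : ℂ) ≠ 0 := by exact_mod_cast hf 1 (by omega)
  have hfN : (f (M + 2) : ℂ) ≠ 0 := by exact_mod_cast hf (M + 2) le_rfl
  rw [slCharPoly_neg_one, hA, slSol_succ_eq_shift f q w hf0 _ (M + 2),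
    slSol_succ_eq_shift f q w hf0 _ (M + 1)]
  apply natDegree_eq_of_le_of_coeff_ne_zero
  · have := slSol_natDegree_le f q w 1 0 (M + 2)
    have := slSol_natDegree_le f q w 0 1 (M + 2)
    have := slSol_natDegree_le (fun k ↦ f (k + 1)) (fun k ↦ q (k + 1)) (fun k ↦ w (k + 1)) 0
      (-(f 0 * A 0 1)) (M + 1)
    have := slSol_natDegree_le (fun k ↦ f (k + 1)) (fun k ↦ q (k + 1)) (fun k ↦ w (k + 1)) 0
      (-(f 0 * A 0 1)) (M + 2)
    compute_degree
    omega
  · simp only [coeff_add, coeff_sub, coeff_C_mul, coeff_C, if_neg (M.succ_ne_zero),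
      slSol_coeff_eq_zero _ _ _ _ _ (show M + 1 - 1 < M + 1 by omega), slSol_succ_coeff_self]
    rw [slLead_succ' f w M, slLead_succ (fun k ↦ f (k + 1)) (fun k ↦ w (k + 1)) M]
    have hL : slLead (fun k ↦ f (k + 1)) (fun k ↦ w (k + 1)) M ≠ 0 :=
      slLead_ne_zero _ _ _ fun j hj ↦ ⟨hf _ (by omega), hw _ (by omega) (by omega)⟩
    convert mul_ne_zero (div_ne_zero hL (mul_ne_zero hf0' hf1)) hr using 1
    field_simp
    ring

end

lemma ne_zero_of_det_eq_one {K : Matrix (Fin 2) (Fin 2) ℝ} (hK : K.det = 1) {a b c : ℝ}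
    (hK00 : K 0 0 = a * K 0 1) (hb : 0 < b) (hc : 0 < c) :
    b * (a * K 1 1 - K 1 0) + a ^ 2 * K 0 1 * c ≠ 0 := by
  intro h
  have : K 0 1 * (b * (a * K 1 1 - K 1 0) + a ^ 2 * K 0 1 * c) = b + (a * K 0 1) ^ 2 * c := by
    rw [det_fin_two, hK00] at hK
    linear_combination b * hK
  rw [h, mul_zero] at this
  nlinarith [sq_nonneg (a * K 0 1)]

theorem eigenvalue_count_coupled_general (N : ℕ) (hN : 2 ≤ N) (f q w : ℕ → ℝ)
    (hf : ∀ n ≤ N, f n ≠ 0) (hw : ∀ n, 1 ≤ n → n ≤ N → 0 < w n)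
    (γ : ℝ)
    (K : Matrix (Fin 2) (Fin 2) ℝ) (hK : K.det = 1) :
    ((K 0 1 ≠ 0 ∧ K 0 0 = f 0 * K 0 1) →
      slCharPoly N f q w
          (Complex.exp (γ * Complex.I) • K.map (Complex.ofReal ·)) (-1) ≠ 0 ∧
      Multiset.card (slCharPoly N f q w
          (Complex.exp (γ * Complex.I) • K.map (Complex.ofReal ·)) (-1)).roots = N - 1) ∧
    (¬ (K 0 1 ≠ 0 ∧ K 0 0 = f 0 * K 0 1) →
      slCharPoly N f q w
          (Complex.exp (γ * Complex.I) • K.map (Complex.ofReal ·)) (-1) ≠ 0 ∧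
      Multiset.card (slCharPoly N f q w
          (Complex.exp (γ * Complex.I) • K.map (Complex.ofReal ·)) (-1)).roots = N) := by
  obtain ⟨M, rfl⟩ : ∃ M, N = M + 2 := ⟨N - 2, by omega⟩
  set E := Complex.exp (γ * Complex.I)
  have hE : E ≠ 0 := Complex.exp_ne_zero _
  have hw' n h1 h2 : w n ≠ 0 := (hw n h1 h2).ne'
  have hA : E * K 0 0 = f 0 * (E * K 0 1) ↔ K 0 0 = f 0 * K 0 1 := by
    rw [mul_left_comm, mul_right_inj' hE]
    exact_mod_cast Iff.rfl
  have hcount {p : ℂ[X]} {n : ℕ} (hp : p.natDegree = n + 1) : p ≠ 0 ∧ p.roots.card = n + 1 :=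
    ⟨ne_zero_of_natDegree_gt (n := 0) (by omega), hp ▸ IsAlgClosed.card_roots_eq_natDegree⟩
  refine ⟨fun ⟨_, hK00⟩ ↦ ?_, fun hK00 ↦ ?_⟩
  · have hr :=
      ne_zero_of_det_eq_one hK hK00 (hw 1 le_rfl (by omega)) (hw (M + 2) (by omega) le_rfl)
    have hdeg := slCharPoly_neg_one_natDegree_of_eq f q w M (E • K.map (Complex.ofReal ·)) hf hw'
      (hA.mpr hK00) <| by
        convert mul_ne_zero hE (Complex.ofReal_ne_zero.mpr hr) using 1
        simp only [Matrix.smul_apply, Matrix.map_apply, smul_eq_mul]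
        push_cast
        ring
    exact hcount hdeg
  · have hne : K 0 0 ≠ f 0 * K 0 1 := fun h ↦
      hK00 ⟨fun h01 ↦ by simp [det_fin_two, h, h01] at hK, h⟩
    have hdeg := slCharPoly_neg_one_natDegree_of_ne f q w (M + 2) (by omega)
      (E • K.map (Complex.ofReal ·)) hf hw' (hA.not.mpr hne)
    exact hcount hdeg

/-- For a coupled self-adjoint boundary condition `[e^{iγ}K | -I]` with `γ ∈ [0,π)`,
`K ∈ SL(2,ℝ)`, the problem has exactly `N-1` eigenvalues if `k₁₂ ≠ 0` and
`k₁₁ = f₀k₁₂`, and exactly `N` eigenvalues otherwise. -/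
theorem eigenvalue_count_coupled (N : ℕ) (hN : 2 ≤ N) (f q w : ℕ → ℝ)
    (hf : ∀ n ≤ N, f n ≠ 0) (hw : ∀ n, 1 ≤ n → n ≤ N → 0 < w n)
    (γ : ℝ) (hγ : γ ∈ Set.Ico 0 Real.pi)
    (K : Matrix (Fin 2) (Fin 2) ℝ) (hK : K.det = 1) :
    ((K 0 1 ≠ 0 ∧ K 0 0 = f 0 * K 0 1) →
      slCharPoly N f q w
          (Complex.exp (γ * Complex.I) • K.map (Complex.ofReal ·)) (-1) ≠ 0 ∧
      Multiset.card (slCharPoly N f q w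
          (Complex.exp (γ * Complex.I) • K.map (Complex.ofReal ·)) (-1)).roots = N - 1) ∧
    (¬ (K 0 1 ≠ 0 ∧ K 0 0 = f 0 * K 0 1) →
      slCharPoly N f q w
          (Complex.exp (γ * Complex.I) • K.map (Complex.ofReal ·)) (-1) ≠ 0 ∧
      Multiset.card (slCharPoly N f q w
          (Complex.exp (γ * Complex.I) • K.map (Complex.ofReal ·)) (-1)).roots = N) :=
  eigenvalue_count_coupled_general N hN f q w hf hw γ K hK
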